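/- arXiv:1808.00202 — 3 statements merged into one kernel-verified Lean document; each statement's English description precedes it below -/
import Mathlib

section
/- Let V be a vector space over a field, let T and L be linear endomorphisms of V, and let c be a nonzero scalar such that T ∘ L = c · (L ∘ T). Then for every scalar α and every integer k ≥ 0, one has (T - cα·id)^k ∘ L = c^k · (L ∘ (T - α·id)^k). In particular, L maps the generalized eigenspace of T for the eigenvalue α into the generalized eigenspace of T for the eigenvalue cα. -/
theorem twisted_commutation {K V : Type*} [Field K] [AddCommGroup V] [Module K V]
    (T L : Module.End K V) (c : K) (hc : c ≠ 0) (hcomm : T * L = c • (L * T))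
    (α : K) :
    (∀ k : ℕ, (T - (c * α) • 1) ^ k * L = c ^ k • (L * (T - α • 1) ^ k)) ∧
    ∀ f : V, (∃ k : ℕ, ((T - α • 1) ^ k) f = 0) →
      ∃ k : ℕ, ((T - (c * α) • 1) ^ k) (L f) = 0 := by
  have base : (T - (c * α) • 1) * L = c • (L * (T - α • 1)) := by
    simp only [sub_mul, mul_sub, smul_sub, hcomm, smul_mul_assoc, mul_smul_comm,
      one_mul, mul_one, smul_smul, mul_comm c α]
  have main : ∀ k : ℕ, (T - (c * α) • 1) ^ k * L = c ^ k • (L * (T - α • 1) ^ k) := by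
    intro k
    induction k with
    | zero => simp
    | succ n ih =>
      calc (T - (c * α) • 1) ^ (n + 1) * L
          = (T - (c * α) • 1) ^ n * ((T - (c * α) • 1) * L) := by
            rw [pow_succ, mul_assoc]
        _ = c • ((T - (c * α) • 1) ^ n * L * (T - α • 1)) := by
            rw [base]; rw [mul_smul_comm, mul_assoc]
        _ = c • ((c ^ n • (L * (T - α • 1) ^ n)) * (T - α • 1)) := by rw [ih]
        _ = c ^ (n + 1) • (L * (T - α • 1) ^ (n + 1)) := by
            rw [smul_mul_assoc, smul_smul, pow_succ, mul_assoc, mul_comm c, ← pow_succ]; rw [← pow_succ]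
  refine ⟨main, fun f ⟨k, hk⟩ => ⟨k, ?_⟩⟩
  have := congrArg (fun g : Module.End K V => g f) (main k)
  simp only [Module.End.mul_apply, LinearMap.smul_apply] at this
  rw [this, hk, map_zero, smul_zero]
end

section
/- Let X be a complex Banach space, T a bounded linear operator on X with uniformly bounded powers, L a (possibly unbounded, everywhere defined) linear map from X to X with T ∘ L = λ · (L ∘ T) for some real λ > 1. If f is a generalized eigenvector of T for a nonzero eigenvalue α (i.e. (T-α)^k f = 0 for some k ≥ 1), then L^m f = 0 for every integer m with λ^m · |α| > 1. -/
/-!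
The twisted commutation relation `T L = λ L T` makes `L` carry the generalized eigenspace of `T`
for `μ` into the one for `λ μ`, so `L^m f` is a generalized eigenvector for `λ^m α`, of modulus
`> 1`. A power-bounded operator has no eigenvector `v` for such a `β`, since
`‖β‖^n ‖v‖ = ‖T^n v‖ ≤ C ‖v‖`; hence no nonzero generalized eigenvector either, and `L^m f = 0`.
-/

open Module End

theorem sub_smul_one_pow_mul_of_mul_eq_smul_mul {R A : Type*} [CommRing R] [Ring A] [Algebra R A]
    {T L : A} {c : R} (h : T * L = c • (L * T)) (μ : R) (k : ℕ) :
    (T - (c * μ) • 1) ^ k * L = c ^ k • (L * (T - μ • 1) ^ k) := by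
  have h_step : (T - (c * μ) • 1) * L = c • (L * (T - μ • 1)) := by
    rw [sub_mul, h, mul_sub, smul_sub, smul_mul_assoc, mul_smul, one_mul, mul_smul_one]
  induction k with
  | zero => simp
  | succ k ih =>
    rw [pow_succ', mul_assoc, ih, mul_smul_comm, ← mul_assoc, h_step, smul_mul_assoc, mul_assoc,
      smul_smul, ← pow_succ, ← pow_succ']

namespace Module.End

variable {R M : Type*} [CommRing R] [AddCommGroup M] [Module R M]

theorem apply_mem_genEigenspace_of_mul_eq_smul_mul {T L : End R M} {c : R}
    (h : T * L = c • (L * T)) {μ : R} {k : ℕ} {v : M} (hv : v ∈ T.genEigenspace μ k) :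
    L v ∈ T.genEigenspace (c * μ) k := by
  rw [mem_genEigenspace_nat, LinearMap.mem_ker] at hv ⊢
  rw [← mul_apply, sub_smul_one_pow_mul_of_mul_eq_smul_mul h, LinearMap.smul_apply, mul_apply,
    hv, map_zero, smul_zero]

theorem pow_apply_mem_genEigenspace_of_mul_eq_smul_mul {T L : End R M} {c : R}
    (h : T * L = c • (L * T)) {μ : R} {k : ℕ} {v : M} (hv : v ∈ T.genEigenspace μ k) (m : ℕ) :
    (L ^ m) v ∈ T.genEigenspace (c ^ m * μ) k := by
  induction m with
  | zero => simpa using hv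
  | succ m ih =>
    rw [pow_succ' L, mul_apply, pow_succ', mul_assoc]
    exact apply_mem_genEigenspace_of_mul_eq_smul_mul h ih

end Module.End

namespace ContinuousLinearMap

variable {𝕜 E : Type*} [NontriviallyNormedField 𝕜] [NormedAddCommGroup E] [NormedSpace 𝕜 E]

theorem not_hasEigenvalue_of_norm_pow_le {T : E →L[𝕜] E} {C : ℝ} (hT : ∀ n : ℕ, ‖T ^ n‖ ≤ C)
    {β : 𝕜} (hβ : 1 < ‖β‖) : ¬ HasEigenvalue (T : End 𝕜 E) β := by
  intro hβT
  obtain ⟨v, hv⟩ := hβT.exists_hasEigenvector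
  have hv0 : 0 < ‖v‖ := norm_pos_iff.mpr hv.2
  obtain ⟨n, hn⟩ := pow_unbounded_of_one_lt C hβ
  have : ‖β‖ ^ n * ‖v‖ ≤ C * ‖v‖ := calc
    ‖β‖ ^ n * ‖v‖ = ‖(T ^ n) v‖ := by
      rw [← coe_coe, toLinearMap_pow, hv.pow_apply, norm_smul, norm_pow]
    _ ≤ C * ‖v‖ := (T ^ n).le_of_opNorm_le (hT n) v
  exact hn.not_ge (le_of_mul_le_mul_right this hv0)

theorem genEigenspace_eq_bot_of_norm_pow_le {T : E →L[𝕜] E} {C : ℝ} (hT : ∀ n : ℕ, ‖T ^ n‖ ≤ C)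
    {β : 𝕜} (hβ : 1 < ‖β‖) (k : ℕ) : genEigenspace (T : End 𝕜 E) β k = ⊥ := by
  by_contra h
  exact not_hasEigenvalue_of_norm_pow_le hT hβ (hasEigenvalue_of_hasGenEigenvalue h)

end ContinuousLinearMap

theorem nilpotency_of_Lv_general {X : Type*} [NormedAddCommGroup X]
    [NormedSpace ℂ X]
    (T : X →L[ℂ] X) (C : ℝ) (hT : ∀ n : ℕ, ‖T ^ n‖ ≤ C)
    (L : Module.End ℂ X) (lam : ℝ)
    (hcomm : (T : Module.End ℂ X) * L = ((lam : ℂ)) • (L * (T : Module.End ℂ X)))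
    (α : ℂ) (f : X) (k : ℕ)
    (heig : ((T - α • 1) ^ k) f = 0) :
    ∀ m : ℕ, 1 < lam ^ m * ‖α‖ → (L ^ m) f = 0 := by
  intro m hm
  have hf : f ∈ genEigenspace (T : End ℂ X) α k := by
    rw [mem_genEigenspace_nat, LinearMap.mem_ker]
    have hcoe : ((T : End ℂ X) - α • 1) ^ k = ↑((T - α • 1) ^ k) := by
      push_cast
      rfl
    rw [hcoe, ContinuousLinearMap.coe_coe]
    exact heig
  have hβ : 1 < ‖(lam : ℂ) ^ m * α‖ := by
    rw [norm_mul, norm_pow, Complex.norm_real, ← norm_pow]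
    exact hm.trans_le (mul_le_mul_of_nonneg_right (Real.le_norm_self _) (norm_nonneg α))
  have hLf := pow_apply_mem_genEigenspace_of_mul_eq_smul_mul hcomm hf m
  rwa [ContinuousLinearMap.genEigenspace_eq_bot_of_norm_pow_le hT hβ, Submodule.mem_bot] at hLf

theorem nilpotency_of_Lv {X : Type*} [NormedAddCommGroup X]
    [NormedSpace ℂ X] [CompleteSpace X]
    (T : X →L[ℂ] X) (C : ℝ) (hT : ∀ n : ℕ, ‖T ^ n‖ ≤ C)
    (L : Module.End ℂ X) (lam : ℝ) (hlam : 1 < lam)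
    (hcomm : (T : Module.End ℂ X) * L = ((lam : ℂ)) • (L * (T : Module.End ℂ X)))
    (α : ℂ) (hα : α ≠ 0) (f : X) (k : ℕ) (hk : 1 ≤ k)
    (heig : ((T - α • 1) ^ k) f = 0) :
    ∀ m : ℕ, 1 < lam ^ m * ‖α‖ → (L ^ m) f = 0 :=
  nilpotency_of_Lv_general T C hT L lam hcomm α f k heig
end

section
/- Let B and C be Banach spaces with a continuous linear inclusion ι : B → C. Suppose that for every ε > 0 there exist finitely many continuous linear functionals ℓ₁,…,ℓ_P on B such that for all x ∈ B, ‖ι(x)‖_C ≤ ε·‖x‖_B + ∑_{p=1}^P |ℓ_p(x)|. Then ι is a compact operator: every bounded sequence in B has a subsequence whose image under ι converges in C. -/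
theorem compactness_criterion {B C : Type*} [NormedAddCommGroup B] [NormedSpace ℝ B]
    [CompleteSpace B] [NormedAddCommGroup C] [NormedSpace ℝ C] [CompleteSpace C]
    (ι : B →L[ℝ] C)
    (h : ∀ ε > (0 : ℝ), ∃ (P : ℕ) (ℓ : Fin P → (B →L[ℝ] ℝ)),
      ∀ x : B, ‖ι x‖ ≤ ε * ‖x‖ + ∑ p, |ℓ p x|)
    (u : ℕ → B) (M : ℝ) (hu : ∀ n, ‖u n‖ ≤ M) :
    ∃ φ : ℕ → ℕ, StrictMono φ ∧
      ∃ y : C, Filter.Tendsto (fun n => ι (u (φ n))) Filter.atTop (nhds y) := by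
  classical
  set M' : ℝ := max M 0 with hM'
  have hM'0 : 0 ≤ M' := le_max_right _ _
  have hu' : ∀ n, ‖u n‖ ≤ M' := fun n => (hu n).trans (le_max_left _ _)
  choose P ℓ hℓ using fun k : ℕ => h (1 / (k + 1)) (by positivity)
  set I := Σ k : ℕ, Fin (P k) with hI
  set v : ℕ → I → ℝ := fun n i => ℓ i.1 i.2 (u n) with hv
  -- the sequence v lives in a compact set
  have hvb : ∀ n i, v n i ∈ Metric.closedBall (0 : ℝ) (‖ℓ i.1 i.2‖ * M') := by
    intro n i
    rw [Metric.mem_closedBall, Real.dist_eq, sub_zero]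
    calc |ℓ i.1 i.2 (u n)| ≤ ‖ℓ i.1 i.2‖ * ‖u n‖ := (ℓ i.1 i.2).le_opNorm _
      _ ≤ ‖ℓ i.1 i.2‖ * M' := by
          exact mul_le_mul_of_nonneg_left (hu' n) (norm_nonneg _)
  have hcomp : IsCompact (Set.pi Set.univ
      (fun i : I => Metric.closedBall (0 : ℝ) (‖ℓ i.1 i.2‖ * M'))) :=
    isCompact_univ_pi fun i => isCompact_closedBall _ _
  obtain ⟨a, -, φ, hφ, hconv⟩ := hcomp.tendsto_subseq
    (x := v) (fun n => Set.mem_univ_pi.2 fun i => hvb n i)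
  refine ⟨φ, hφ, ?_⟩
  have hcoord : ∀ i : I, Filter.Tendsto (fun n => v (φ n) i) Filter.atTop (nhds (a i)) := by
    intro i
    exact tendsto_pi_nhds.1 hconv i
  -- the image sequence is Cauchy
  have hcauchy : CauchySeq (fun n => ι (u (φ n))) := by
    rw [Metric.cauchySeq_iff]
    intro ε hε
    -- choose k with (2 * M') / (k+1) < ε / 2
    obtain ⟨k, hk⟩ := exists_nat_gt ((2 * M') / (ε / 2))
    have hk1 : (0 : ℝ) < (k : ℝ) + 1 := by positivity
    have hkey : 1 / ((k : ℝ) + 1) * (2 * M') < ε / 2 := by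
      rw [div_lt_iff₀ (by linarith : (0:ℝ) < ε / 2)] at hk
      rw [div_mul_eq_mul_div, one_mul, div_lt_iff₀ hk1]
      nlinarith
    -- the finite sum of |v (φ n) ⟨k,p⟩ - a ⟨k,p⟩| tends to 0
    set g : ℕ → ℝ := fun n => ∑ p : Fin (P k), |v (φ n) ⟨k, p⟩ - a ⟨k, p⟩| with hg
    have hgto : Filter.Tendsto g Filter.atTop (nhds 0) := by
      have : Filter.Tendsto g Filter.atTop
          (nhds (∑ p : Fin (P k), |a ⟨k, p⟩ - a ⟨k, p⟩|)) := by
        apply tendsto_finset_sum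
        intro p _
        exact ((hcoord ⟨k, p⟩).sub tendsto_const_nhds).abs
      simpa using this
    have hev : ∀ᶠ n in Filter.atTop, g n < ε / 4 :=
      hgto.eventually_lt_const (by linarith)
    obtain ⟨N, hN⟩ := Filter.eventually_atTop.1 hev
    refine ⟨N, fun m hm n hn => ?_⟩
    have hbound : ‖ι (u (φ m)) - ι (u (φ n))‖ < ε := by
      have h1 : ι (u (φ m)) - ι (u (φ n)) = ι (u (φ m) - u (φ n)) := by
        rw [map_sub]
      rw [h1]
      have h2 := hℓ k (u (φ m) - u (φ n))
      have h3 : ‖u (φ m) - u (φ n)‖ ≤ 2 * M' := by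
        calc ‖u (φ m) - u (φ n)‖ ≤ ‖u (φ m)‖ + ‖u (φ n)‖ := norm_sub_le _ _
          _ ≤ 2 * M' := by linarith [hu' (φ m), hu' (φ n)]
      have h4 : ∑ p : Fin (P k), |ℓ k p (u (φ m) - u (φ n))| ≤ g m + g n := by
        rw [hg]
        simp only [map_sub]
        rw [← Finset.sum_add_distrib]
        apply Finset.sum_le_sum
        intro p _
        have : ℓ k p (u (φ m)) - ℓ k p (u (φ n)) =
            (v (φ m) ⟨k, p⟩ - a ⟨k, p⟩) + (a ⟨k, p⟩ - v (φ n) ⟨k, p⟩) := by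
          simp only [hv]; ring
        rw [this]
        calc |_| ≤ |v (φ m) ⟨k, p⟩ - a ⟨k, p⟩| + |a ⟨k, p⟩ - v (φ n) ⟨k, p⟩| := abs_add_le _ _
          _ = |v (φ m) ⟨k, p⟩ - a ⟨k, p⟩| + |v (φ n) ⟨k, p⟩ - a ⟨k, p⟩| := by
              rw [abs_sub_comm (a ⟨k, p⟩)]
      have h5 : 1 / ((k : ℝ) + 1) * ‖u (φ m) - u (φ n)‖ ≤ 1 / ((k : ℝ) + 1) * (2 * M') :=
        mul_le_mul_of_nonneg_left h3 (by positivity)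
      have hgm := hN m hm
      have hgn := hN n hn
      calc ‖ι (u (φ m) - u (φ n))‖
          ≤ 1 / ((k : ℝ) + 1) * ‖u (φ m) - u (φ n)‖
            + ∑ p : Fin (P k), |ℓ k p (u (φ m) - u (φ n))| := by
            simpa using h2
        _ < ε := by linarith
    simpa [dist_eq_norm] using hbound
  obtain ⟨y, hy⟩ := cauchySeq_tendsto_of_complete hcauchy
  exact ⟨y, hy⟩
end
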